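/- For any base class F ⊆ {0,1}^{ {0,1}* } with finite VC dimension and any T ≥ 1, the VC dimension of the chain-of-thought loss class L^{CoT(T)}(F) is at most 3 · VCdim(F) · log₂(2T / ln 2); in particular it is O(VCdim(F) · log T). -/

import Mathlib

/-!
Whether `f` incurs chain-of-thought loss on `z` depends only on the values of `f` on the `T`
prefixes of `z` that the chain of thought is checked against. So if the loss class shatters `d`
inputs, the `2 ^ d` labelings are realised by `2 ^ d` distinct traces of `F` on a set of at
most `d * T` strings, and the Sauer–Shelah lemma gives `2 ^ d ≤ ∑ k ≤ D, (d * T).choose k`,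
which is at most `(e * d * T / D) ^ D`. Taking logarithms and bounding `log` by its tangent
line at `2 T / log 2` gives `d ≤ 2 * D * logb 2 (2 * T / log 2)`.
-/

def applyAppend (f : List Bool → Bool) (x : List Bool) : List Bool := x ++ [f x]

def cot (f : List Bool → Bool) (T : ℕ) (x : List Bool) : List Bool :=
  (applyAppend f)^[T] x

/-- The chain-of-thought loss class `L^{CoT(T)}(F)`. -/
def lossClass (F : Set (List Bool → Bool)) (T : ℕ) : Set (List Bool → Bool) :=
  (fun f => fun z : List Bool => decide (z ≠ cot f T (z.take (z.length - T)))) '' F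

/-- VC-shattering of a set of `d` points. -/
def Shatters {X : Type*} (H : Set (X → Bool)) (d : ℕ) : Prop :=
  ∃ x : Fin d → X, ∀ b : Fin d → Bool, ∃ h ∈ H, ∀ i, h (x i) = b i


open Finset

section ChainOfThought

variable {f g : List Bool → Bool}

def cotLoss (f : List Bool → Bool) (T : ℕ) (z : List Bool) : Bool :=
  decide (z ≠ cot f T (z.take (z.length - T)))

def cotWindow (T : ℕ) (z : List Bool) : Finset (List Bool) :=
  (Ico (z.length - T) z.length).image z.take

lemma cot_succ (f : List Bool → Bool) (k : ℕ) (w : List Bool) :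
    cot f (k + 1) w = cot f k w ++ [f (cot f k w)] :=
  Function.iterate_succ_apply' _ _ _

lemma length_cot (f : List Bool → Bool) (k : ℕ) (w : List Bool) :
    (cot f k w).length = w.length + k := by
  induction k with
  | zero => rfl
  | succ k ih => simp [cot_succ, ih, Nat.add_assoc]

lemma cot_congr {k : ℕ} {w : List Bool}
    (h : ∀ m, w.length ≤ m → m < w.length + k →
      f ((cot f k w).take m) = g ((cot f k w).take m)) :
    cot g k w = cot f k w := by
  induction k with
  | zero => rfl
  | succ k ih =>
    have hprefix : ∀ m ≤ (cot f k w).length, (cot f (k + 1) w).take m = (cot f k w).take m :=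
      fun m hm => by rw [cot_succ, List.take_append_of_le_length hm]
    have hk : cot g k w = cot f k w := ih fun m h₁ h₂ => by
      have := h m h₁ (by omega)
      rwa [hprefix m (by rw [length_cot]; omega)] at this
    have hlast : g (cot f k w) = f (cot f k w) := by
      have := h (cot f k w).length (by rw [length_cot]; omega) (by rw [length_cot]; omega)
      rw [hprefix _ le_rfl, List.take_length] at this
      exact this.symm
    rw [cot_succ, cot_succ, hk, hlast]

lemma card_cotWindow_le (T : ℕ) (z : List Bool) : #(cotWindow T z) ≤ T :=
  card_image_le.trans (by simp; omega)

lemma cotLoss_congr {T : ℕ} {z : List Bool} (h : ∀ p ∈ cotWindow T z, f p = g p) :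
    cotLoss f T z = cotLoss g T z := by
  set w := z.take (z.length - T)
  have hcot : ∀ {f g : List Bool → Bool}, (∀ p ∈ cotWindow T z, f p = g p) →
      z = cot f T w → z = cot g T w := by
    intro f g h hz
    have hlen : z.length = w.length + T := by rw [← length_cot f T w, ← hz]
    refine hz.trans (cot_congr fun m h₁ h₂ => ?_).symm
    rw [← hz]
    exact h _ (mem_image_of_mem _ (mem_Ico.2 ⟨by omega, by omega⟩))
  simp only [cotLoss, decide_eq_decide, ne_eq, not_iff_not]
  exact ⟨hcot h, hcot fun p hp => (h p hp).symm⟩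

end ChainOfThought

section SauerShelah

variable {X Y : Type*}

lemma shatters_card_of_forall_subset {H : Set (X → Bool)} {s : Finset X}
    (hs : ∀ t ⊆ s, ∃ h ∈ H, ∀ a ∈ s, h a = true ↔ a ∈ t) : Shatters H #s := by
  classical
  let x : Fin #s ↪ X := s.equivFin.symm.toEmbedding.trans (Function.Embedding.subtype _)
  refine ⟨x, fun b => ?_⟩
  obtain ⟨h, hH, hh⟩ := hs ((univ.filter (b · = true)).map x) fun a ha => by
    obtain ⟨i, -, rfl⟩ := mem_map.1 ha
    exact (s.equivFin.symm i).2
  refine ⟨h, hH, fun i => Bool.eq_iff_iff.2 ?_⟩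
  rw [hh (x i) (s.equivFin.symm i).2, mem_map', mem_filter]
  simp

theorem ncard_le_sum_choose_of_forall_shatters_le [Fintype X] {H : Set (X → Bool)} {D : ℕ}
    (hH : ∀ d, Shatters H d → d ≤ D) :
    H.ncard ≤ ∑ k ∈ Iic D, (Fintype.card X).choose k := by
  classical
  let e : (X → Bool) → Finset X := fun h => univ.filter (h · = true)
  have he : e.Injective := fun h h' hh =>
    funext fun a => Bool.eq_iff_iff.2 (by simpa [e] using Finset.ext_iff.1 hh a)
  let 𝒜 := H.toFinset.image e
  have hvc : 𝒜.vcDim ≤ D := Finset.sup_le fun s hs => hH _ <| shatters_card_of_forall_subset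
    fun t ht => by
      obtain ⟨u, hu, hsu⟩ := mem_shatterer.1 hs ht
      obtain ⟨h, hH, rfl⟩ := mem_image.1 hu
      refine ⟨h, Set.mem_toFinset.1 hH, fun a ha => ?_⟩
      simp [← hsu, ha, e]
  calc H.ncard = #𝒜 := by rw [card_image_of_injective _ he, Set.ncard_eq_toFinset_card']
    _ ≤ #𝒜.shatterer := card_le_card_shatterer 𝒜
    _ ≤ ∑ k ∈ Iic 𝒜.vcDim, (Fintype.card X).choose k := card_shatterer_le_sum_vcDim
    _ ≤ ∑ k ∈ Iic D, (Fintype.card X).choose k := sum_le_sum_of_subset (Iic_subset_Iic.2 hvc)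

lemma Shatters.of_image_domRestrict {H : Set (X → Bool)} {S : Set X} {d : ℕ}
    (h : Shatters ((fun f => S.domRestrict f) '' H) d) : Shatters H d := by
  obtain ⟨x, hx⟩ := h
  refine ⟨fun i => x i, fun b => ?_⟩
  obtain ⟨-, ⟨f, hf, rfl⟩, hfb⟩ := hx b
  exact ⟨f, hf, hfb⟩

lemma two_pow_le_ncard_image_domRestrict {F : Set (X → Bool)} {Λ : (X → Bool) → Y → Bool}
    {S : Set X} [Finite S] {d : ℕ} {y : Fin d → Y}
    (hy : ∀ b : Fin d → Bool, ∃ h ∈ Λ '' F, ∀ i, h (y i) = b i)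
    (hΛ : ∀ f g, S.EqOn f g → ∀ i, Λ f (y i) = Λ g (y i)) :
    2 ^ d ≤ ((fun f => S.domRestrict f) '' F).ncard := by
  choose h hF hh using hy
  choose f hf hfh using hF
  have hinj : Set.InjOn (fun b => S.domRestrict (f b)) Set.univ := fun b _ b' _ hbb' =>
    funext fun i => by
      rw [← hh b i, ← hh b' i, ← hfh b, ← hfh b']
      exact hΛ _ _ (Set.domRestrict_eq_domRestrict_iff.1 hbb') i
  calc 2 ^ d = (Set.univ : Set (Fin d → Bool)).ncard := by simp
    _ ≤ _ := Set.ncard_le_ncard_of_injOn _ (fun b _ => Set.mem_image_of_mem _ (hf b)) hinj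
      (Set.toFinite _)

end SauerShelah

section Estimates

open Real

lemma sum_choose_le_div_pow_mul_exp {n D : ℕ} (hDn : D ≤ n) :
    ∑ k ∈ Iic D, (n.choose k : ℝ) ≤ ((n : ℝ) / D) ^ D * exp D := by
  rcases D.eq_zero_or_pos with rfl | hD
  · simp [Iic_ofNat]
  have hn : 0 < n := hD.trans_le hDn
  set r : ℝ := D / n
  have hr : 0 < r := by positivity
  have hr1 : r ≤ 1 := div_le_one_of_le₀ (by exact_mod_cast hDn) (by positivity)
  -- the binomial theorem for `(1 + r) ^ n`, with each term weighted by `r ^ k ≥ r ^ D`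
  have hweighted : (∑ k ∈ Iic D, (n.choose k : ℝ)) * r ^ D ≤ exp D := calc
    _ = ∑ k ∈ Iic D, (n.choose k : ℝ) * r ^ D := sum_mul ..
    _ ≤ ∑ k ∈ Iic D, (n.choose k : ℝ) * r ^ k := sum_le_sum fun k hk =>
        mul_le_mul_of_nonneg_left (pow_le_pow_of_le_one hr.le hr1 (mem_Iic.1 hk)) (by positivity)
    _ ≤ ∑ k ∈ range (n + 1), (n.choose k : ℝ) * r ^ k :=
        sum_le_sum_of_subset_of_nonneg (fun k hk => mem_range_succ_iff.2 ((mem_Iic.1 hk).trans hDn))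
          fun _ _ _ => by positivity
    _ = (r + 1) ^ n := by rw [add_pow]; simp [mul_comm]
    _ ≤ exp r ^ n := by gcongr; linarith [add_one_le_exp r]
    _ = exp D := by rw [← exp_nat_mul, mul_div_cancel₀ _ (by positivity)]
  rw [← le_div_iff₀ (by positivity)] at hweighted
  calc _ ≤ exp D / r ^ D := hweighted
    _ = _ := by rw [div_eq_mul_inv, ← inv_pow, inv_div, mul_comm]

lemma le_two_mul_logb_of_two_pow_le {d D : ℕ} {T : ℝ} (hd : 0 < d) (hD : 0 < D) (hT : 0 < T)
    (h : (2 : ℝ) ^ d ≤ (d * T / D) ^ D * exp D) :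
    (d : ℝ) ≤ 2 * D * logb 2 (2 * T / log 2) := by
  set X := 2 * T / log 2
  have hlog : d * log 2 ≤ D * log (d * T / D) + D := by
    have := log_le_log (by positivity) h
    rwa [log_pow, log_mul (by positivity) (by positivity), log_pow, log_exp] at this
  -- the tangent line of `log` at `X`
  have htangent : log (d * T / D) ≤ d * log 2 / (2 * D) - 1 + log X := by
    have := log_le_sub_one_of_pos (x := d * T / D / X) (by positivity)
    rw [log_div (by positivity) (by positivity)] at this
    have hX : (d : ℝ) * T / D / X = d * log 2 / (2 * D) := by
      simp only [X]
      field_simp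
    linarith
  have hscaled := mul_le_mul_of_nonneg_left htangent (Nat.cast_nonneg D)
  have hD' : (D : ℝ) * (d * log 2 / (2 * D)) = d * log 2 / 2 := by field_simp
  rw [mul_add, mul_sub, hD'] at hscaled
  rw [logb, ← mul_div_assoc, le_div_iff₀ (by positivity)]
  linarith

lemma le_three_mul_logb_of_two_pow_le_sum_choose {d D T n : ℕ} (hT : 1 ≤ T) (hn : n ≤ d * T)
    (h : 2 ^ d ≤ ∑ k ∈ Iic D, n.choose k) :
    (d : ℝ) ≤ 3 * D * logb 2 (2 * T / log 2) := by
  have hlogb : 1 ≤ logb 2 (2 * T / log 2) := by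
    rw [le_logb_iff_rpow_le one_lt_two (by positivity), rpow_one, le_div_iff₀ (by positivity)]
    have : (1 : ℝ) ≤ T := by exact_mod_cast hT
    linarith [log_two_lt_d9]
  rcases le_or_gt d D with hdD | hDd
  · have : (d : ℝ) ≤ D := by exact_mod_cast hdD
    nlinarith
  have hdn : d ≤ n := by
    refine (Nat.pow_le_pow_iff_right one_lt_two).1 (h.trans ?_)
    rw [← Nat.sum_range_choose]
    exact sum_le_sum_of_ne_zero fun k _ hk =>
      mem_range_succ_iff.2 (not_lt.1 (mt Nat.choose_eq_zero_iff.2 hk))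
  have hD : 0 < D := Nat.pos_of_ne_zero <| by
    rintro rfl
    simp only [Iic_ofNat, sum_singleton, Nat.choose_zero_right] at h
    exact h.not_gt (Nat.one_lt_two_pow hDd.ne')
  have hR : (2 : ℝ) ^ d ≤ (d * T / D) ^ D * exp D := calc
    (2 : ℝ) ^ d ≤ ∑ k ∈ Iic D, (n.choose k : ℝ) := by exact_mod_cast h
    _ ≤ (n / D) ^ D * exp D := sum_choose_le_div_pow_mul_exp (hDd.le.trans hdn)
    _ ≤ (d * T / D) ^ D * exp D := by gcongr; exact_mod_cast hn
  have := le_two_mul_logb_of_two_pow_le (hD.trans hDd) hD (by positivity) hR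
  nlinarith

end Estimates

theorem vcDim_lossClass_le_general (F : Set (List Bool → Bool)) (D T : ℕ) (hT : 1 ≤ T)
    (hDmax : ∀ d, Shatters F d → d ≤ D) :
    ∀ d, Shatters (lossClass F T) d →
      (d : ℝ) ≤ 3 * D * Real.logb 2 (2 * T / Real.log 2) := by
  rintro d ⟨x, hx⟩
  let S := univ.biUnion fun i => cotWindow T (x i)
  have hS : #S ≤ d * T := by
    simpa using card_biUnion_le_card_mul univ _ T fun i _ => card_cotWindow_le T (x i)
  have htraces : 2 ^ d ≤ ((fun f => (S : Set _).domRestrict f) '' F).ncard :=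
    two_pow_le_ncard_image_domRestrict (Λ := fun f => cotLoss f T) hx fun f g hfg i =>
      cotLoss_congr fun p hp => hfg (mem_coe.2 (mem_biUnion.2 ⟨i, mem_univ i, hp⟩))
  have hsauer :
      ((fun f => (S : Set _).domRestrict f) '' F).ncard ≤ ∑ k ∈ Iic D, (#S).choose k :=
    (ncard_le_sum_choose_of_forall_shatters_le fun k hk =>
      hDmax k hk.of_image_domRestrict).trans_eq (by simp)
  exact le_three_mul_logb_of_two_pow_le_sum_choose hT hS (htraces.trans hsauer)

/-- if `F` has finite VC dimension `D`, then for every `T ≥ 1` the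
VC dimension of the chain-of-thought loss class is at most
`3·D·log₂(2T/ln 2)`, which is `O(D·log T)`. -/
theorem vcDim_lossClass_le (F : Set (List Bool → Bool)) (D T : ℕ) (hT : 1 ≤ T)
    (hD : Shatters F D) (hDmax : ∀ d, Shatters F d → d ≤ D) :
    ∀ d, Shatters (lossClass F T) d →
      (d : ℝ) ≤ 3 * D * Real.logb 2 (2 * T / Real.log 2) :=
  vcDim_lossClass_le_general F D T hT hDmax
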